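/- arXiv:2504.14195 — 2 statements merged into one kernel-verified Lean document; each statement's English description precedes it below -/
import Mathlib

section
/- River satisfies independence of Smith-dominated alternatives: if River is equipped with a consistent tiebreaker function, then for every preference profile P and every alternative x ∈ A(P) ∖ Sm(P), the River winner set of P equals the River winner set of P_{−x}. -/
/-! ## Preference profiles -/

/-- A preference profile: a finite set of voters, a finite set of alternatives,
and for each voter a (Boolean-valued) preference relation, `pref i x y` meaning
voter `i` ranks `x` above `y`. -/
structure Profile (ν α : Type) where
  voters : Finset ν
  alts : Finset α
  pref : ν → α → α → Bool

namespace Profile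

variable {ν α : Type}

/-- A profile is valid if there is at least one voter, at least two alternatives,
and every voter's preference is a strict linear order on the alternatives. -/
def Valid (P : Profile ν α) : Prop :=
  P.voters.Nonempty ∧ 2 ≤ P.alts.card ∧
  (∀ i ∈ P.voters, ∀ a ∈ P.alts, ¬ P.pref i a a) ∧
  (∀ i ∈ P.voters, ∀ a ∈ P.alts, ∀ b ∈ P.alts, ∀ c ∈ P.alts,
      P.pref i a b → P.pref i b c → P.pref i a c) ∧
  (∀ i ∈ P.voters, ∀ a ∈ P.alts, ∀ b ∈ P.alts, a ≠ b → (P.pref i a b ↔ ¬ P.pref i b a))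

/-- The majority margin of `x` over `y`. -/
def margin (P : Profile ν α) (x y : α) : ℤ :=
  ((P.voters.filter (fun i => P.pref i x y)).card : ℤ) -
    ((P.voters.filter (fun i => P.pref i y x)).card : ℤ)

/-- The restriction of a profile to the alternatives other than `x`. -/
def restrict [DecidableEq α] (P : Profile ν α) (x : α) : Profile ν α :=
  ⟨P.voters, P.alts.erase x, P.pref⟩

/-- `y` Pareto-dominates `x`: every voter ranks `y` above `x`,
i.e. the margin of `y` over `x` equals the number of voters. -/
def ParetoDominates (P : Profile ν α) (y x : α) : Prop :=
  P.margin y x = P.voters.card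

/-- A profile is uniquely weighted if no margin between distinct alternatives is zero and
distinct ordered pairs of distinct alternatives have distinct margins. -/
def UniquelyWeighted (P : Profile ν α) : Prop :=
  (∀ x ∈ P.alts, ∀ y ∈ P.alts, x ≠ y → P.margin x y ≠ 0) ∧
  (∀ x ∈ P.alts, ∀ y ∈ P.alts, ∀ v ∈ P.alts, ∀ w ∈ P.alts,
      x ≠ y → v ≠ w → (x, y) ≠ (v, w) → P.margin x y ≠ P.margin v w)

end Profile

/-! ## Lists, precedence, tiebreakers -/

/-- `e` precedes `f` in the list `L`. -/
def Precedes {β : Type} (L : List β) (e f : β) : Prop :=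
  ∃ l₁ l₂ l₃ : List β, L = l₁ ++ e :: (l₂ ++ f :: l₃)

/-- A tiebreaker for a profile `P`: a linear order (list) of all ordered pairs of distinct
alternatives with nonnegative margin, in which pairs with strictly larger margin come first. -/
def IsTiebreaker {ν α : Type} (P : Profile ν α) (L : List (α × α)) : Prop :=
  L.Nodup ∧
  (∀ e : α × α, e ∈ L ↔ e.1 ∈ P.alts ∧ e.2 ∈ P.alts ∧ e.1 ≠ e.2 ∧ 0 ≤ P.margin e.1 e.2) ∧
  L.Pairwise (fun e f => P.margin f.1 f.2 ≤ P.margin e.1 e.2)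

/-! ## The River method -/

open Classical in
/-- The River diagram: process the edges in the order given by `L`, adding an edge unless
it would create a directed cycle or a second incoming edge at its target. -/
noncomputable def riverDiagram {α : Type} (L : List (α × α)) : Finset (α × α) :=
  L.foldl (fun E e =>
    if (∃ f ∈ E, f.2 = e.2) ∨ Relation.ReflTransGen (fun a b => (a, b) ∈ E) e.2 e.1
    then E else insert e E) ∅

open Classical in
/-- The River winners: the sources (vertices with no incoming edge) of the River diagram. -/
noncomputable def riverWinners {ν α : Type} (P : Profile ν α) (L : List (α × α)) : Finset α :=
  P.alts.filter (fun x => ∀ f ∈ riverDiagram L, f.2 ≠ x)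

/-! ## Split Cycle -/

/-- The (cyclically) consecutive edges of a cycle given by a list of distinct vertices. -/
def cycleEdges {α : Type} (c : List α) : List (α × α) := c.zip (c.rotate 1)

/-- A majority cycle: a cycle of distinct alternatives all of whose edges have positive margin. -/
def IsMajorityCycle {ν α : Type} (P : Profile ν α) (c : List α) : Prop :=
  c.Nodup ∧ (∀ a ∈ c, a ∈ P.alts) ∧ ∀ e ∈ cycleEdges c, 0 < P.margin e.1 e.2

/-- `e` is a splitting edge of some majority cycle: it attains the minimum margin on the cycle. -/
def IsSplittingEdge {ν α : Type} (P : Profile ν α) (e : α × α) : Prop :=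
  ∃ c : List α, IsMajorityCycle P c ∧ e ∈ cycleEdges c ∧
    ∀ f ∈ cycleEdges c, P.margin e.1 e.2 ≤ P.margin f.1 f.2

open Classical in
/-- The Split Cycle winners: alternatives with no incoming edge in the Split Cycle diagram,
whose edges are the positive-margin pairs that are not splitting edges of any majority cycle. -/
noncomputable def splitCycleWinners {ν α : Type} (P : Profile ν α) : Finset α :=
  P.alts.filter (fun x => ¬ ∃ y ∈ P.alts, 0 < P.margin y x ∧ ¬ IsSplittingEdge P (y, x))

/-! ## Ranked Pairs -/

/-- A processing order for Ranked Pairs: all pairs with positive margin,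
ordered by decreasing margin. -/
def IsRPOrder {ν α : Type} (P : Profile ν α) (L : List (α × α)) : Prop :=
  L.Nodup ∧
  (∀ e : α × α, e ∈ L ↔ e.1 ∈ P.alts ∧ e.2 ∈ P.alts ∧ 0 < P.margin e.1 e.2) ∧
  L.Pairwise (fun e f => P.margin f.1 f.2 ≤ P.margin e.1 e.2)

open Classical in
/-- The Ranked Pairs diagram: add each edge in order unless it would create a directed cycle. -/
noncomputable def rpDiagram {α : Type} (L : List (α × α)) : Finset (α × α) :=
  L.foldl (fun E e =>
    if Relation.ReflTransGen (fun a b => (a, b) ∈ E) e.2 e.1 then E else insert e E) ∅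

open Classical in
/-- The Ranked Pairs winners: sources of the Ranked Pairs diagram. -/
noncomputable def rpWinners {ν α : Type} (P : Profile ν α) (L : List (α × α)) : Finset α :=
  P.alts.filter (fun x => ∀ f ∈ rpDiagram L, f.2 ≠ x)

/-! ## Beat Path -/

/-- A majority path: a sequence of distinct alternatives with positive margins along it. -/
def IsMajorityPath {ν α : Type} (P : Profile ν α) (p : List α) : Prop :=
  p.Nodup ∧ (∀ a ∈ p, a ∈ P.alts) ∧ p.Chain' (fun a b => 0 < P.margin a b)

/-- `s_P(x,y)`: the maximum strength (minimum margin along the path) of a majority path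
from `x` to `y`, and `0` if there is no such path. -/
noncomputable def beatPathStrength {ν α : Type} (P : Profile ν α) (x y : α) : ℤ :=
  sSup ({0} ∪ {s : ℤ | ∃ p : List α, IsMajorityPath P p ∧ p.head? = some x ∧
    p.getLast? = some y ∧ ((p.zip p.tail).map (fun e => P.margin e.1 e.2)).min? = some s})

open Classical in
/-- The Beat Path winners. -/
noncomputable def beatPathWinners {ν α : Type} (P : Profile ν α) : Finset α :=
  P.alts.filter (fun x => ∀ y ∈ P.alts, y ≠ x →
    beatPathStrength P y x ≤ beatPathStrength P x y)

/-! ## Stable Voting -/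

/-- Auxiliary, fuel-based definition of Stable Voting (for uniquely weighted profiles).
If only one alternative remains it wins; otherwise the winner is the alternative `x` of the
first pair `(x,y)` (ordered by decreasing margin) with `m(x,y) > 0` and `x` a Split Cycle
winner, such that `x` is a Stable Voting winner of the profile without `y`. -/
noncomputable def svAux {ν α : Type} [DecidableEq α] : ℕ → Profile ν α → Set α
  | 0, P => ↑P.alts
  | (n+1), P =>
      if P.alts.card ≤ 1 then ↑P.alts
      else {x | x ∈ P.alts ∧ ∃ y ∈ P.alts, 0 < P.margin x y ∧ x ∈ splitCycleWinners P ∧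
        x ∈ svAux n (P.restrict y) ∧
        ∀ x' ∈ P.alts, ∀ y' ∈ P.alts, 0 < P.margin x' y' → x' ∈ splitCycleWinners P →
          P.margin x y < P.margin x' y' → x' ∉ svAux n (P.restrict y')}

/-- The Stable Voting winners (for uniquely weighted profiles). -/
noncomputable def svWinners {ν α : Type} [DecidableEq α] (P : Profile ν α) : Set α :=
  svAux P.alts.card P

/-! ## Smith set, covering, quasi-Pareto domination -/

/-- A dominant set of alternatives: nonempty, and each member defeats every non-member. -/
def IsDominant {ν α : Type} (P : Profile ν α) (X : Finset α) : Prop :=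
  X.Nonempty ∧ X ⊆ P.alts ∧ ∀ x ∈ X, ∀ y ∈ P.alts, y ∉ X → 0 < P.margin x y

/-- The Smith set: the inclusion-minimal dominant set. -/
def IsSmithSet {ν α : Type} (P : Profile ν α) (S : Finset α) : Prop :=
  IsDominant P S ∧ ∀ X : Finset α, IsDominant P X → S ⊆ X

/-- `y` covers `x`: `y` defeats `x` and does at least as well against every third alternative. -/
def Covers {ν α : Type} (P : Profile ν α) (y x : α) : Prop :=
  0 < P.margin y x ∧ ∀ z ∈ P.alts, z ≠ x → z ≠ y → P.margin x z ≤ P.margin y z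

/-- `y` quasi-Pareto-dominates `x`. -/
def QuasiParetoDominates {ν α : Type} (P : Profile ν α) (y x : α) : Prop :=
  Covers P y x ∧ ∀ z ∈ P.alts, z ≠ x → z ≠ y →
    P.margin z x ≤ P.margin y x ∧ P.margin x z ≤ P.margin y x

/-! ## Tiebreaker functions -/

/-- A consistent tiebreaker function: it assigns a tiebreaker to every profile, and the relative
order of two edges not involving `x` is unchanged when `x` is removed from the profile. -/
def IsConsistentTBF {ν α : Type} [DecidableEq α] (T : Profile ν α → List (α × α)) : Prop :=
  (∀ P : Profile ν α, IsTiebreaker P (T P)) ∧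
  ∀ (P : Profile ν α) (x a b c d : α), x ∈ P.alts →
    x ≠ a → x ≠ b → x ≠ c → x ≠ d →
    (a, b) ∈ T P → (c, d) ∈ T P →
    (Precedes (T P) (a, b) (c, d) ↔ Precedes (T (P.restrict x)) (a, b) (c, d))

/-- A Pareto-consistent tiebreaker function: consistent, and whenever `y` Pareto-dominates `x`,
the edge `(y,z)` precedes the edge `(x,z)` for every third alternative `z`. -/
def IsParetoConsistentTBF {ν α : Type} [DecidableEq α]
    (T : Profile ν α → List (α × α)) : Prop :=
  IsConsistentTBF T ∧
  ∀ (P : Profile ν α) (x y z : α), P.ParetoDominates y x →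
    z ≠ x → z ≠ y → (y, z) ∈ T P → (x, z) ∈ T P → Precedes (T P) (y, z) (x, z)

/-- A quasi-Pareto-consistent tiebreaker function. -/
def IsQuasiParetoConsistentTBF {ν α : Type} [DecidableEq α]
    (T : Profile ν α → List (α × α)) : Prop :=
  IsParetoConsistentTBF T ∧
  (∀ (P : Profile ν α) (x y y' : α),
      P.margin y x = P.margin y' x → QuasiParetoDominates P y x →
      ¬ QuasiParetoDominates P y' x →
      (y, x) ∈ T P → (y', x) ∈ T P → Precedes (T P) (y, x) (y', x)) ∧
  (∀ (P : Profile ν α) (x y z : α), QuasiParetoDominates P y x →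
      ((x, z) ∈ T P → (y, z) ∈ T P → Precedes (T P) (y, z) (x, z)) ∧
      ((x, z) ∈ T P → (y, x) ∈ T P → Precedes (T P) (y, x) (x, z)))

/-- A tiebreaker for `P` induced by the fixed tie-breaking order `r` on pairs:
edges are ordered by decreasing margin, ties in margin broken according to `r`. -/
def IsTiebreakerVia {ν α : Type} (r : α × α → α × α → Prop) (P : Profile ν α)
    (L : List (α × α)) : Prop :=
  IsTiebreaker P L ∧ ∀ e f : α × α, Precedes L e f →
    P.margin f.1 f.2 < P.margin e.1 e.2 ∨ (P.margin e.1 e.2 = P.margin f.1 f.2 ∧ r e f)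

/-! Every edge of a tiebreaker that enters the Smith set `S` starts in `S`, so whether the River
method accepts such an edge depends only on the edges already accepted inside `S`: the two
River diagrams of `P` and `P_{-x}` (whose tiebreaker is that of `P` with the edges at `x`
filtered out) therefore have the same edges entering `S`. Moreover, every alternative
`z ∉ S` gets an incoming edge, since the edge `(s, z)` from some `s ∈ S` can only be rejected
if `z` already has a parent or if it closes a cycle, and no path leads from `z` into `S`.
Hence both winner sets lie in `S`, where they are determined by the common edges. -/

open List in
theorem precedes_iff_sublist {β : Type} {L : List β} {e f : β} :
    Precedes L e f ↔ [e, f] <+ L := by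
  constructor
  · rintro ⟨l₁, l₂, l₃, rfl⟩
    simp
  · intro h
    obtain ⟨r₁, r₂, rfl, he, hf⟩ := List.cons_sublist_iff.1 h
    obtain ⟨s, t, rfl⟩ := List.append_of_mem he
    obtain ⟨u, v, rfl⟩ := List.append_of_mem (List.singleton_sublist.1 hf)
    exact ⟨s, t ++ u, v, by simp⟩

open List in
theorem List.Nodup.not_sublist_pair_swap {β : Type} {L : List β} {a b : β} (hL : L.Nodup)
    (hab : [a, b] <+ L) : ¬ [b, a] <+ L := by
  intro hba
  obtain ⟨r₁, r₂, rfl, ha, hb⟩ := List.cons_sublist_iff.1 hab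
  obtain ⟨s₁, s₂, hs, hb', ha'⟩ := List.cons_sublist_iff.1 hba
  rw [List.singleton_sublist] at hb ha'
  rcases List.append_eq_append_iff.1 hs with ⟨t, rfl, rfl⟩ | ⟨t, rfl, rfl⟩ <;> grind

open List in
theorem List.Perm.eq_of_pair_sublist {β : Type} {L₁ L₂ : List β} (hp : L₁ ~ L₂)
    (hL₂ : L₂.Nodup) (h : ∀ a b, [a, b] <+ L₁ → [a, b] <+ L₂) : L₁ = L₂ :=
  hp.eq_of_pairwise (le := fun a b => [a, b] <+ L₂)
    (fun _ _ _ _ hab hba => absurd hba (hL₂.not_sublist_pair_swap hab))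
    (List.pairwise_of_forall_sublist (h _ _)) (List.pairwise_of_forall_sublist id)

theorem Profile.margin_swap {ν α : Type} (P : Profile ν α) (a b : α) :
    P.margin b a = -P.margin a b := by
  simp [Profile.margin]

def NoEdgeEnters {α γ : Type} [Membership (α × α) γ] (S : Finset α) (E : γ) : Prop :=
  ∀ e ∈ E, e.2 ∈ S → e.1 ∈ S

section Dominance

variable {ν α : Type} {P : Profile ν α} {S : Finset α}

theorem IsDominant.noEdgeEnters {L : List (α × α)} (hS : IsDominant P S)
    (hL : IsTiebreaker P L) : NoEdgeEnters S L := by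
  intro e he he₂
  obtain ⟨he₁, -, -, hm⟩ := (hL.2.1 e).1 he
  by_contra h
  have := hS.2.2 e.2 he₂ e.1 he₁ h
  rw [Profile.margin_swap] at hm
  omega

theorem IsDominant.restrict [DecidableEq α] (hS : IsDominant P S) {x : α} (hx : x ∉ S) :
    IsDominant (P.restrict x) S :=
  ⟨hS.1, fun _ hs => Finset.mem_erase.2 ⟨ne_of_mem_of_not_mem hs hx, hS.2.1 hs⟩,
    fun s hs y hy hyS => hS.2.2 s hs y (Finset.mem_of_mem_erase hy) hyS⟩

end Dominance

open List in
theorem IsConsistentTBF.restrict_eq_filter {ν α : Type} [DecidableEq α]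
    {T : Profile ν α → List (α × α)} (hT : IsConsistentTBF T) (P : Profile ν α) {x : α}
    (hx : x ∈ P.alts) :
    T (P.restrict x) = (T P).filter (fun e => e.1 ≠ x ∧ e.2 ≠ x) := by
  have hmem : ∀ e, e ∈ T (P.restrict x) ↔ e ∈ T P ∧ e.1 ≠ x ∧ e.2 ≠ x := by
    intro e
    rw [(hT.1 _).2.1, (hT.1 P).2.1]
    simp only [Profile.restrict, Profile.margin, Finset.mem_erase]
    tauto
  have hperm : T (P.restrict x) ~ (T P).filter (fun e => e.1 ≠ x ∧ e.2 ≠ x) :=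
    (List.perm_ext_iff_of_nodup (hT.1 _).1 ((hT.1 P).1.filter _)).2 fun e => by simp [hmem]
  refine hperm.eq_of_pair_sublist ((hT.1 P).1.filter _) fun e f hef => ?_
  obtain ⟨heL, he₁, he₂⟩ := (hmem e).1 (hef.subset (by simp))
  obtain ⟨hfL, hf₁, hf₂⟩ := (hmem f).1 (hef.subset (by simp))
  have hprec : [e, f] <+ T P := precedes_iff_sublist.1 <|
    (hT.2 P x _ _ _ _ hx he₁.symm he₂.symm hf₁.symm hf₂.symm heL hfL).2
      (precedes_iff_sublist.2 hef)
  simpa [he₁, he₂, hf₁, hf₂] using hprec.filter (fun e => e.1 ≠ x ∧ e.2 ≠ x)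

theorem Relation.ReflTransGen.backward_closed {β : Type} {r r' : β → β → Prop} {p : β → Prop}
    (h : ∀ a b, r a b → p b → p a ∧ r' a b) {u v : β} (huv : Relation.ReflTransGen r u v)
    (hv : p v) : p u ∧ Relation.ReflTransGen r' u v := by
  induction huv with
  | refl => exact ⟨hv, .refl⟩
  | tail _ hbc ih =>
    obtain ⟨hb, hbc'⟩ := h _ _ hbc hv
    exact (ih hb).imp_right (·.tail hbc')

section River

open Classical

variable {α : Type}

-- Reducible, so that the `if` in `riverStep` elaborates to the same classical `Decidable`
-- instance as in `riverDiagram`, making `riverDiagram_eq_foldl` hold by `rfl`.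
abbrev RiverBlocked (E : Finset (α × α)) (e : α × α) : Prop :=
  (∃ f ∈ E, f.2 = e.2) ∨ Relation.ReflTransGen (fun a b => (a, b) ∈ E) e.2 e.1

noncomputable def riverStep (E : Finset (α × α)) (e : α × α) : Finset (α × α) :=
  if RiverBlocked E e then E else insert e E

theorem riverDiagram_eq_foldl (L : List (α × α)) : riverDiagram L = L.foldl riverStep ∅ := rfl

theorem RiverBlocked.mono {E E' : Finset (α × α)} {e : α × α} (h : E ⊆ E')
    (hb : RiverBlocked E e) : RiverBlocked E' e :=
  hb.imp (fun ⟨f, hf, hfe⟩ => ⟨f, h hf, hfe⟩)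
    (Relation.ReflTransGen.mono (fun _ _ hab => h hab) _ _)

theorem subset_riverStep (E : Finset (α × α)) (e : α × α) : E ⊆ riverStep E e := by
  unfold riverStep
  split_ifs
  exacts [subset_rfl, Finset.subset_insert e E]

theorem riverBlocked_riverStep (E : Finset (α × α)) (e : α × α) :
    RiverBlocked (riverStep E e) e := by
  unfold riverStep
  split_ifs with h
  exacts [h, Or.inl ⟨e, Finset.mem_insert_self e E, rfl⟩]

theorem mem_riverStep {E : Finset (α × α)} {e f : α × α} (h : f ∈ riverStep E e) :
    f = e ∨ f ∈ E := by
  unfold riverStep at h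
  split_ifs at h
  exacts [Or.inr h, Finset.mem_insert.1 h]

theorem mem_riverStep_iff_of_snd_ne {E : Finset (α × α)} {e f : α × α} (hf : f.2 ≠ e.2) :
    f ∈ riverStep E e ↔ f ∈ E :=
  ⟨fun h => (mem_riverStep h).resolve_left (fun hfe => hf (hfe ▸ rfl)),
    fun h => subset_riverStep E e h⟩

theorem subset_foldl_riverStep (L : List (α × α)) (E : Finset (α × α)) :
    E ⊆ L.foldl riverStep E := by
  induction L generalizing E with
  | nil => exact subset_rfl
  | cons a L ih => exact (subset_riverStep E a).trans (ih _)

theorem riverBlocked_foldl_riverStep {L : List (α × α)} {e : α × α} (he : e ∈ L)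
    (E : Finset (α × α)) : RiverBlocked (L.foldl riverStep E) e := by
  induction L generalizing E with
  | nil => simp at he
  | cons a L ih =>
    rcases List.mem_cons.1 he with rfl | he
    · exact (riverBlocked_riverStep E e).mono (subset_foldl_riverStep L _)
    · exact ih he _

theorem riverBlocked_riverDiagram {L : List (α × α)} {e : α × α} (he : e ∈ L) :
    RiverBlocked (riverDiagram L) e :=
  riverBlocked_foldl_riverStep he ∅

theorem noEdgeEnters_riverStep {S : Finset α} {E : Finset (α × α)} {e : α × α}
    (hE : NoEdgeEnters S E) (he : e.2 ∈ S → e.1 ∈ S) : NoEdgeEnters S (riverStep E e) := by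
  intro f hf
  rcases mem_riverStep hf with rfl | hf
  exacts [he, hE f hf]

theorem noEdgeEnters_foldl_riverStep {S : Finset α} {L : List (α × α)}
    (hL : NoEdgeEnters S L) {E : Finset (α × α)} (hE : NoEdgeEnters S E) :
    NoEdgeEnters S (L.foldl riverStep E) := by
  induction L generalizing E with
  | nil => exact hE
  | cons a L ih =>
    exact ih (fun e he => hL e (List.mem_cons_of_mem a he))
      (noEdgeEnters_riverStep hE (hL a List.mem_cons_self))

theorem noEdgeEnters_riverDiagram {S : Finset α} {L : List (α × α)} (hL : NoEdgeEnters S L) :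
    NoEdgeEnters S (riverDiagram L) :=
  noEdgeEnters_foldl_riverStep hL (by simp [NoEdgeEnters])

theorem RiverBlocked.of_edges_entering {S : Finset α} {E E' : Finset (α × α)}
    (hE : NoEdgeEnters S E) (hEE' : ∀ f ∈ E, f.2 ∈ S → f ∈ E') {e : α × α} (he₁ : e.1 ∈ S)
    (he₂ : e.2 ∈ S) (hb : RiverBlocked E e) : RiverBlocked E' e := by
  rcases hb with ⟨f, hf, hfe⟩ | hpath
  · exact Or.inl ⟨f, hEE' f hf (hfe ▸ he₂), hfe⟩
  · exact Or.inr (hpath.backward_closed (r' := fun a b => (a, b) ∈ E')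
      (fun a b hab hb => ⟨hE (a, b) hab hb, hEE' (a, b) hab hb⟩) he₁).2

theorem riverStep_edges_entering_iff {S : Finset α} {E E' : Finset (α × α)}
    (hE : NoEdgeEnters S E) (hE' : NoEdgeEnters S E')
    (hEE' : ∀ f : α × α, f.2 ∈ S → (f ∈ E ↔ f ∈ E')) {e : α × α} (he : e.2 ∈ S → e.1 ∈ S)
    {f : α × α} (hf : f.2 ∈ S) : f ∈ riverStep E e ↔ f ∈ riverStep E' e := by
  by_cases he₂ : e.2 ∈ S
  · have hblocked : RiverBlocked E e ↔ RiverBlocked E' e :=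
      ⟨.of_edges_entering hE (fun g hg hgS => (hEE' g hgS).1 hg) (he he₂) he₂,
        .of_edges_entering hE' (fun g hg hgS => (hEE' g hgS).2 hg) (he he₂) he₂⟩
    unfold riverStep
    split_ifs with h h' h'
    · exact hEE' f hf
    · exact absurd (hblocked.1 h) h'
    · exact absurd (hblocked.2 h') h
    · simp only [Finset.mem_insert, hEE' f hf]
  · have hfe : f.2 ≠ e.2 := fun h => he₂ (h ▸ hf)
    rw [mem_riverStep_iff_of_snd_ne hfe, mem_riverStep_iff_of_snd_ne hfe, hEE' f hf]

theorem foldl_riverStep_filter_edges_entering_iff {S : Finset α} {L : List (α × α)}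
    (p : α × α → Bool) (hL : NoEdgeEnters S L) (hp : ∀ e ∈ L, e.2 ∈ S → p e)
    {E E' : Finset (α × α)} (hE : NoEdgeEnters S E) (hE' : NoEdgeEnters S E')
    (hEE' : ∀ f : α × α, f.2 ∈ S → (f ∈ E ↔ f ∈ E')) {f : α × α} (hf : f.2 ∈ S) :
    f ∈ L.foldl riverStep E ↔ f ∈ (L.filter p).foldl riverStep E' := by
  induction L generalizing E E' with
  | nil => exact hEE' f hf
  | cons a L ih =>
    have ha := hL a List.mem_cons_self
    have hL' : NoEdgeEnters S L := fun e he => hL e (List.mem_cons_of_mem a he)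
    have hp' : ∀ e ∈ L, e.2 ∈ S → p e := fun e he => hp e (List.mem_cons_of_mem a he)
    by_cases hpa : p a
    · rw [List.filter_cons_of_pos hpa]
      exact ih hL' hp' (noEdgeEnters_riverStep hE ha) (noEdgeEnters_riverStep hE' ha)
        (fun _ hg => riverStep_edges_entering_iff hE hE' hEE' ha hg)
    · rw [List.filter_cons_of_neg hpa]
      have ha₂ : a.2 ∉ S := fun h => hpa (hp a List.mem_cons_self h)
      exact ih hL' hp' (noEdgeEnters_riverStep hE ha) hE' fun g hg => by
        rw [mem_riverStep_iff_of_snd_ne (fun h => ha₂ (h ▸ hg)), hEE' g hg]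

theorem riverDiagram_filter_edges_entering_iff {S : Finset α} {L : List (α × α)}
    (p : α × α → Bool) (hL : NoEdgeEnters S L) (hp : ∀ e ∈ L, e.2 ∈ S → p e) {f : α × α}
    (hf : f.2 ∈ S) : f ∈ riverDiagram L ↔ f ∈ riverDiagram (L.filter p) :=
  foldl_riverStep_filter_edges_entering_iff p hL hp (by simp [NoEdgeEnters])
    (by simp [NoEdgeEnters]) (fun _ _ => Iff.rfl) hf

theorem riverWinners_subset_of_isDominant {ν : Type} {P : Profile ν α} {L : List (α × α)}
    (hL : IsTiebreaker P L) {S : Finset α} (hS : IsDominant P S) : riverWinners P L ⊆ S := by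
  intro z hz
  obtain ⟨hz, hno⟩ := Finset.mem_filter.1 hz
  by_contra hzS
  obtain ⟨s, hs⟩ := hS.1
  have hsz : (s, z) ∈ L := (hL.2.1 _).2
    ⟨hS.2.1 hs, hz, fun h : s = z => hzS (h ▸ hs), (hS.2.2 s hs z hz hzS).le⟩
  rcases riverBlocked_riverDiagram hsz with ⟨f, hf, hfz⟩ | hpath
  · exact hno f hf hfz
  · have hclosed := noEdgeEnters_riverDiagram (hS.noEdgeEnters hL)
    exact hzS (hpath.backward_closed (p := (· ∈ S)) (r' := fun _ _ => True)
      (fun a b hab hb => ⟨hclosed (a, b) hab hb, trivial⟩) hs).1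

end River

theorem river_ISDA_general {ν α : Type} [DecidableEq α] (T : Profile ν α → List (α × α))
    (hT : IsConsistentTBF T)
    (P : Profile ν α) (x : α) (hx : x ∈ P.alts)
    (S : Finset α) (hS : IsSmithSet P S) (hxS : x ∉ S) :
    riverWinners P (T P) = riverWinners (P.restrict x) (T (P.restrict x)) := by
  have hdom := hS.1
  have hsub := riverWinners_subset_of_isDominant (hT.1 P) hdom
  have hsub' := riverWinners_subset_of_isDominant (hT.1 _) (hdom.restrict hxS)
  rw [hT.restrict_eq_filter P hx] at hsub' ⊢
  have hclosed := hdom.noEdgeEnters (hT.1 P)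
  have hsame : ∀ f : α × α, f.2 ∈ S → (f ∈ riverDiagram (T P) ↔
      f ∈ riverDiagram ((T P).filter fun e => e.1 ≠ x ∧ e.2 ≠ x)) :=
    fun f hf => riverDiagram_filter_edges_entering_iff _ hclosed
      (fun e he he₂ => by
        simpa using ⟨fun h => hxS (h ▸ hclosed e he he₂), fun h => hxS (h ▸ he₂)⟩) hf
  ext z
  by_cases hzS : z ∈ S
  · have hzx : z ≠ x := fun h => hxS (h ▸ hzS)
    simp only [riverWinners, Profile.restrict, Finset.mem_filter, Finset.mem_erase, hzx,
      ne_eq, not_false_eq_true, true_and]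
    exact and_congr_right fun _ =>
      ⟨fun h f hf hfz => h f ((hsame f (hfz ▸ hzS)).2 hf) hfz,
        fun h f hf hfz => h f ((hsame f (hfz ▸ hzS)).1 hf) hfz⟩
  · exact iff_of_false (fun h => hzS (hsub h)) (fun h => hzS (hsub' h))

theorem river_ISDA {ν α : Type} [DecidableEq α] (T : Profile ν α → List (α × α))
    (hT : IsConsistentTBF T)
    (P : Profile ν α) (hP : P.Valid) (x : α) (hx : x ∈ P.alts)
    (S : Finset α) (hS : IsSmithSet P S) (hxS : x ∉ S) :
    riverWinners P (T P) = riverWinners (P.restrict x) (T (P.restrict x)) :=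
  river_ISDA_general T hT P x hx S hS hxS
end

section
/- Ranked Pairs violates independence of Pareto-dominated alternatives, even on uniquely weighted profiles: there exists a uniquely weighted preference profile P and alternatives a, b ∈ A(P) such that b Pareto-dominates a and RP(P) ≠ RP(P_{−a}). -/
/-!
The counterexample has alternatives `a, b, c, d` (encoded as `0, 1, 2, 3`) and 22 voters, with
positive margins `b > a` (22, a Pareto domination), `b > d` (12), `a > d` (8), `c > a` (6),
`d > c` (4) and `c > b` (2), all distinct, so the processing order is forced. Ranked Pairs locks
in `b > a`, `b > d`, `a > d`, `c > a`, rejects `d > c` because of the path `c → a → d`, and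
locks in `c > b`, so `c` is the only source. Without `a` that path is gone: `b > d` and `d > c`
are locked in, `c > b` is rejected, and `b` wins instead.
-/

theorem Profile.UniquelyWeighted.restrict {ν α : Type} [DecidableEq α] {P : Profile ν α}
    (hP : P.UniquelyWeighted) (a : α) : (P.restrict a).UniquelyWeighted := by
  refine ⟨fun x hx y hy => hP.1 x (Finset.mem_of_mem_erase hx) y (Finset.mem_of_mem_erase hy),
    fun x hx y hy v hv w hw => ?_⟩
  exact hP.2 x (Finset.mem_of_mem_erase hx) y (Finset.mem_of_mem_erase hy)
    v (Finset.mem_of_mem_erase hv) w (Finset.mem_of_mem_erase hw)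

namespace IsRPOrder

variable {ν α : Type} {P : Profile ν α}

theorem of_forall_mem {L : List (α × α)} (hnd : L.Nodup)
    (hmem : ∀ e ∈ L, e.1 ∈ P.alts ∧ e.2 ∈ P.alts ∧ 0 < P.margin e.1 e.2)
    (hcomplete : ∀ x ∈ P.alts, ∀ y ∈ P.alts, 0 < P.margin x y → (x, y) ∈ L)
    (hsorted : L.Pairwise (fun e f => P.margin f.1 f.2 ≤ P.margin e.1 e.2)) :
    IsRPOrder P L :=
  ⟨hnd, fun e => ⟨hmem e, fun ⟨hx, hy, he⟩ => hcomplete e.1 hx e.2 hy he⟩, hsorted⟩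

theorem eq_of_uniquelyWeighted (hP : P.UniquelyWeighted) {L L' : List (α × α)}
    (hL : IsRPOrder P L) (hL' : IsRPOrder P L') : L = L' := by
  have hperm : L.Perm L' :=
    (List.perm_ext_iff_of_nodup hL.1 hL'.1).2 fun e => (hL.2.1 e).trans (hL'.2.1 e).symm
  refine hperm.eq_of_pairwise (fun e f he hf hef hfe => ?_) hL.2.2 hL'.2.2
  obtain ⟨he₁, he₂, he⟩ := (hL.2.1 e).1 he
  obtain ⟨hf₁, hf₂, hf⟩ := (hL'.2.1 f).1 hf
  have hne_of_pos : ∀ {x y : α}, 0 < P.margin x y → x ≠ y := by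
    rintro x y hxy rfl
    exact hxy.ne' (sub_self _)
  by_contra hne
  exact hP.2 e.1 he₁ e.2 he₂ f.1 hf₁ f.2 hf₂ (hne_of_pos he) (hne_of_pos hf) hne
    (le_antisymm hfe hef)

end IsRPOrder

open Classical in
noncomputable def rpLock {α : Type} (E : Finset (α × α)) (e : α × α) : Finset (α × α) :=
  if Relation.ReflTransGen (fun a b => (a, b) ∈ E) e.2 e.1 then E else insert e E

theorem rpDiagram_eq_foldl {α : Type} (L : List (α × α)) :
    rpDiagram L = L.foldl rpLock ∅ := rfl

theorem rpLock_of_reflTransGen {α : Type} {E : Finset (α × α)} {e : α × α}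
    (h : Relation.ReflTransGen (fun a b => (a, b) ∈ E) e.2 e.1) : rpLock E e = E :=
  if_pos h

theorem rpLock_of_closed {α : Type} [DecidableEq α] {E : Finset (α × α)} {e : α × α}
    (S : Finset α) (hS : ∀ f ∈ E, f.1 ∈ S → f.2 ∈ S) (h₂ : e.2 ∈ S) (h₁ : e.1 ∉ S) :
    rpLock E e = insert e E := by
  have hreach : ∀ {x y : α}, Relation.ReflTransGen (fun a b => (a, b) ∈ E) x y →
      x ∈ S → y ∈ S := by
    intro x y h hx
    induction h with
    | refl => exact hx
    | tail _ hbc ih => exact hS _ hbc ih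
  rw [rpLock, if_neg fun h => h₁ (hreach h h₂)]
  -- the two sides differ only in the `DecidableEq` instance used by `insert`
  congr!

/-- Each ballot lists the alternatives from best to worst. -/
def ipdaBallots : List (List ℕ) :=
  [[1,2,0,3],[3,1,2,0],[2,1,0,3],[3,2,1,0],[2,1,0,3],[3,2,1,0],[1,3,0,2],[2,1,3,0],
   [1,0,3,2],[2,1,0,3],[1,0,3,2],[2,1,0,3],[1,0,3,2],[2,1,0,3],[1,0,3,2],[2,1,0,3],
   [1,0,3,2],[2,1,0,3],[3,2,1,0],[1,0,3,2],[3,2,1,0],[1,0,3,2]]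

def ipdaProfile : Profile ℕ ℕ :=
  ⟨Finset.range 22, {0,1,2,3},
   fun i x y => decide ((ipdaBallots.getD i []).idxOf x < (ipdaBallots.getD i []).idxOf y)⟩

def ipdaRPOrder : List (ℕ × ℕ) := [(1,0), (1,3), (0,3), (2,0), (3,2), (2,1)]

def ipdaRPOrderRestrict : List (ℕ × ℕ) := [(1,3), (3,2), (2,1)]

theorem ipdaProfile_valid : ipdaProfile.Valid := by
  unfold Profile.Valid
  decide

theorem ipdaProfile_uniquelyWeighted : ipdaProfile.UniquelyWeighted := by
  unfold Profile.UniquelyWeighted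
  decide

theorem ipdaProfile_paretoDominates : ipdaProfile.ParetoDominates 1 0 := by
  unfold Profile.ParetoDominates
  decide

theorem isRPOrder_ipdaRPOrder : IsRPOrder ipdaProfile ipdaRPOrder :=
  .of_forall_mem (by decide) (by decide) (by decide) (by decide)

theorem isRPOrder_ipdaRPOrderRestrict : IsRPOrder (ipdaProfile.restrict 0) ipdaRPOrderRestrict :=
  .of_forall_mem (by decide) (by decide) (by decide) (by decide)

theorem rpDiagram_ipdaRPOrder :
    rpDiagram ipdaRPOrder = {(2,1), (2,0), (0,3), (1,3), (1,0)} := by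
  rw [ipdaRPOrder, rpDiagram_eq_foldl, List.foldl_cons, rpLock_of_closed {0}, List.foldl_cons,
    rpLock_of_closed {3}, List.foldl_cons, rpLock_of_closed {3}, List.foldl_cons,
    rpLock_of_closed {0, 3}, List.foldl_cons,
    rpLock_of_reflTransGen (.head (b := 0) ?_ (.single ?_)), List.foldl_cons,
    rpLock_of_closed {0, 1, 3}, List.foldl_nil]
  all_goals decide

theorem rpDiagram_ipdaRPOrderRestrict : rpDiagram ipdaRPOrderRestrict = {(3,2), (1,3)} := by
  rw [ipdaRPOrderRestrict, rpDiagram_eq_foldl, List.foldl_cons, rpLock_of_closed {3},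
    List.foldl_cons, rpLock_of_closed {2}, List.foldl_cons,
    rpLock_of_reflTransGen (.head (b := 3) ?_ (.single ?_)), List.foldl_nil]
  all_goals decide

theorem rpWinners_ipdaProfile : rpWinners ipdaProfile ipdaRPOrder = {2} := by
  rw [rpWinners, Finset.filter_congr_decidable, rpDiagram_ipdaRPOrder]
  decide

theorem rpWinners_ipdaProfile_restrict :
    rpWinners (ipdaProfile.restrict 0) ipdaRPOrderRestrict = {1} := by
  rw [rpWinners, Finset.filter_congr_decidable, rpDiagram_ipdaRPOrderRestrict]
  decide

theorem rankedPairs_violates_IPDA : ∃ (P : Profile ℕ ℕ) (a b : ℕ),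
    P.Valid ∧ P.UniquelyWeighted ∧ a ∈ P.alts ∧ b ∈ P.alts ∧
    P.ParetoDominates b a ∧
    ∀ L L' : List (ℕ × ℕ), IsRPOrder P L → IsRPOrder (P.restrict a) L' →
      rpWinners P L ≠ rpWinners (P.restrict a) L' := by
  refine ⟨ipdaProfile, 0, 1, ipdaProfile_valid, ipdaProfile_uniquelyWeighted, by decide,
    by decide, ipdaProfile_paretoDominates, fun L L' hL hL' => ?_⟩
  rw [hL.eq_of_uniquelyWeighted ipdaProfile_uniquelyWeighted isRPOrder_ipdaRPOrder,
    hL'.eq_of_uniquelyWeighted (ipdaProfile_uniquelyWeighted.restrict 0)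
      isRPOrder_ipdaRPOrderRestrict,
    rpWinners_ipdaProfile, rpWinners_ipdaProfile_restrict]
  decide
end
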